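/- arXiv:2104.08609 — 6 statements merged into one kernel-verified Lean document; each statement's English description precedes it below -/
import Mathlib

section
/- Let ν be a valuation on K[x] and q ∈ K[x] a non-constant polynomial such that ν(q) is torsion-free over the value group νK (i.e., no positive integer multiple of ν(q) lies in the divisible hull of νK), while for every f ∈ K[x] with deg(f) < deg(q), ν(f) is torsion over νK. Then ν equals its truncation ν_q, i.e., for every f ∈ K[x] with q-expansion f = f_0 + f_1 q + ... + f_s q^s (deg f_i < deg q), we have ν(f) = min_{0≤i≤s} ν(f_i q^i). -/
open Polynomial

variable {K : Type*} [Field K] {Γ : Type*} [AddCommGroup Γ] [LinearOrder Γ] [IsOrderedAddMonoid Γ]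

/-- The `i`-th coefficient of the `q`-expansion of `f`. -/
noncomputable def qCoeff (q f : Polynomial K) (i : ℕ) : Polynomial K :=
  f / q ^ i % q

/-- The truncation `ν_q` of `w` at `q` :
`ν_q(f) = min_i ν(f_i q^i)` over the `q`-expansion `f = Σ f_i q^i`. -/
noncomputable def trunc (w : Polynomial K → WithTop Γ) (q f : Polynomial K) : WithTop Γ :=
  (Finset.range (f.natDegree + 1)).inf fun i => w (qCoeff q f i * q ^ i)

/-- `b` is an admissible index in the definition of `ε(f)`. -/
def ValidIdx (w : Polynomial K → WithTop Γ) (f : Polynomial K) (b : ℕ) : Prop :=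
  1 ≤ b ∧ b ≤ f.natDegree ∧ w f ≠ ⊤ ∧ w (Polynomial.hasseDeriv b f) ≠ ⊤

/-- `(w(g) - w(∂_c g))/c ≤ (w(f) - w(∂_b f))/b`, written multiplicatively
(cross-multiplied) to stay inside `WithTop Γ`. -/
def RatioLE (w : Polynomial K → WithTop Γ) (g : Polynomial K) (c : ℕ)
    (f : Polynomial K) (b : ℕ) : Prop :=
  b • w g + c • w (Polynomial.hasseDeriv b f) ≤ c • w f + b • w (Polynomial.hasseDeriv c g)

/-- `f` is a generator of the support of `w`. -/
def IsGenSupp (w : Polynomial K → WithTop Γ) (f : Polynomial K) : Prop :=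
  ∀ g, w g = ⊤ ↔ f ∣ g

/-- `ε(f) ≥ ε(Q)` (for the valuation `w`), taking the conventions
`ε(f) = -∞` if `deg f = 0` (more generally, if the defining set is empty) and
`ε(f) = ∞` if `f` generates the support of `w`. -/
def EpsGE (w : Polynomial K → WithTop Γ) (f Q : Polynomial K) : Prop :=
  IsGenSupp w f ∨
    (¬ IsGenSupp w Q ∧
      ((∀ c, ¬ ValidIdx w Q c) ∨
        ∃ b, ValidIdx w f b ∧ ∀ c, ValidIdx w Q c → RatioLE w Q c f b))

/-- `Q` is a key polynomial for `w` : `Q` is monic and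
`ε(f) ≥ ε(Q)` implies `deg f ≥ deg Q`. -/
def IsKeyPoly (w : Polynomial K → WithTop Γ) (Q : Polynomial K) : Prop :=
  Q.Monic ∧ ∀ f : Polynomial K, f ≠ 0 → EpsGE w f Q → Q.natDegree ≤ f.natDegree


/-!
Expand `f = ∑ fᵢ qⁱ`. Each nonzero `fᵢ` has degree `< deg q`, so `ν fᵢ` is torsion over `νK`.
If two finite terms had the same value, `ν(fᵢ qⁱ) = ν(fⱼ qʲ)` with `i < j` would give
`ν fᵢ = ν fⱼ + (j - i) ν q`, making `ν q` torsion over `νK`. Hence the finite values of the terms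
are pairwise distinct, and the value of the sum is the minimum of the values of its terms.
-/

namespace Polynomial

theorem div_eq_of_mul_add_eq {f g d r : K[X]} (h : g * d + r = f) (hr : r.degree < g.degree) :
    f / g = d := by
  have hg : g ≠ 0 := ne_zero_of_degree_gt hr
  have hu : g.leadingCoeff ≠ 0 := leadingCoeff_ne_zero.2 hg
  obtain ⟨hdiv, -⟩ := div_modByMonic_unique (f := f) (C g.leadingCoeff * d) r
    (monic_mul_leadingCoeff_inv hg)
    ⟨by rw [← h, mul_assoc, ← mul_assoc (C _), ← C_mul, inv_mul_cancel₀ hu, C_1, one_mul,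
      add_comm], by rwa [degree_mul_leadingCoeff_inv _ hg]⟩
  rw [div_def, hdiv, ← mul_assoc, ← C_mul, inv_mul_cancel₀ hu, C_1, one_mul]

theorem div_div_eq_div_mul (f p r : K[X]) : f / p / r = f / (p * r) := by
  rcases eq_or_ne p 0 with rfl | hp
  · simp
  rcases eq_or_ne r 0 with rfl | hr
  · simp
  refine (div_eq_of_mul_add_eq (r := p * (f / p % r) + f % p) ?_ ?_).symm
  · linear_combination EuclideanDomain.div_add_mod f p + p * EuclideanDomain.div_add_mod (f / p) r
  · have hp' : p.degree ≠ ⊥ := by simpa using hp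
    refine (degree_add_le _ _).trans_lt (max_lt ?_ ?_)
    · rw [degree_mul, degree_mul]
      exact WithBot.add_lt_add_left hp' (EuclideanDomain.mod_lt _ hr)
    · rw [degree_mul]
      exact (EuclideanDomain.mod_lt _ hp).trans_le
        (le_add_of_nonneg_right (zero_le_degree_iff.2 hr))

end Polynomial

theorem qCoeff_zero (q f : K[X]) : qCoeff q f 0 = f % q := by
  simp [qCoeff]

theorem qCoeff_succ (q f : K[X]) (i : ℕ) : qCoeff q f (i + 1) = qCoeff q (f / q) i := by
  rw [qCoeff, qCoeff, div_div_eq_div_mul, pow_succ']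

theorem sum_qCoeff_mul_pow {q : K[X]} (hq : 0 < q.degree) {N : ℕ} {f : K[X]}
    (hf : f.degree < N) : ∑ i ∈ Finset.range N, qCoeff q f i * q ^ i = f := by
  induction N generalizing f with
  | zero =>
    rw [Nat.cast_zero, Nat.WithBot.lt_zero_iff, degree_eq_bot] at hf
    simp [hf]
  | succ N ih =>
    have hdiv : (f / q).degree < N := by
      rcases eq_or_ne f 0 with rfl | hf0
      · simp
      · exact (degree_div_lt hf0 hq).trans_le (Order.le_of_lt_succ hf)
    simp_rw [Finset.sum_range_succ', qCoeff_zero, qCoeff_succ, pow_succ, ← mul_assoc,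
      ← Finset.sum_mul, ih hdiv, pow_zero, mul_one]
    rw [mul_comm, EuclideanDomain.div_add_mod]

theorem AddValuation.map_sum_eq_inf {R Γ₀ ι : Type*} [Ring R]
    [LinearOrderedAddCommMonoidWithTop Γ₀] (v : AddValuation R Γ₀) {s : Finset ι} {g : ι → R}
    (hg : ∀ i ∈ s, ∀ j ∈ s, i ≠ j → v (g i) ≠ ⊤ → v (g i) ≠ v (g j)) :
    v (∑ i ∈ s, g i) = s.inf fun i => v (g i) := by
  classical
  refine le_antisymm ?_ (v.map_le_sum fun i hi => Finset.inf_le hi)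
  rcases s.eq_empty_or_nonempty with rfl | hs
  · simp
  obtain ⟨i₀, hi₀, hinf⟩ := s.exists_mem_eq_inf hs fun i => v (g i)
  rw [hinf]
  rcases eq_or_ne (v (g i₀)) ⊤ with htop | hfin
  · exact htop ▸ le_top
  have hrest : v (g i₀) < v (∑ i ∈ s.erase i₀, g i) :=
    v.map_lt_sum hfin fun i hi =>
      lt_of_le_of_ne (hinf ▸ Finset.inf_le (Finset.mem_of_mem_erase hi))
        (hg i₀ hi₀ i (Finset.mem_of_mem_erase hi) (Finset.ne_of_mem_erase hi).symm hfin)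
  rw [← Finset.add_sum_erase s g hi₀, v.map_add_eq_of_lt_left hrest]

/-- `γ` is torsion over the value group `νK`, realised as the values `ν (C c)` of the nonzero
constants. -/
def IsTorsionOver (ν : AddValuation K[X] (WithTop Γ)) (γ : WithTop Γ) : Prop :=
  ∃ n : ℕ, 0 < n ∧ ∃ c : K, c ≠ 0 ∧ n • γ = ν (C c)

namespace IsTorsionOver

variable {ν : AddValuation K[X] (WithTop Γ)} {β γ : WithTop Γ}

theorem right_of_add (h : IsTorsionOver ν (β + γ)) (hβ : IsTorsionOver ν β) :
    IsTorsionOver ν γ := by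
  obtain ⟨m, hm, a, ha, hA⟩ := h
  obtain ⟨n, hn, b, hb, hB⟩ := hβ
  refine ⟨m * n, by positivity, a ^ n / b ^ m, by simp [ha, hb], ?_⟩
  have hbm : ν (C (b ^ m)) ≠ ⊤ := (ν.comap C).ne_top_iff.2 (pow_ne_zero _ hb)
  apply WithTop.add_left_cancel hbm
  rw [← ν.map_mul, ← C_mul, mul_div_cancel₀ _ (pow_ne_zero _ hb), C_pow, C_pow, ν.map_pow,
    ν.map_pow, ← hA, ← hB, ← mul_nsmul', ← mul_nsmul, ← nsmul_add, mul_comm]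

theorem of_nsmul {k : ℕ} (hk : 0 < k) (h : IsTorsionOver ν (k • γ)) : IsTorsionOver ν γ := by
  obtain ⟨n, hn, c, hc, hγ⟩ := h
  exact ⟨n * k, by positivity, c, hc, by rw [mul_nsmul', hγ]⟩

end IsTorsionOver

theorem val_mul_pow_ne_of_lt {ν : AddValuation K[X] (WithTop Γ)} {q a b : K[X]} {i j : ℕ}
    (hq : ¬ IsTorsionOver ν (ν q)) (ha : IsTorsionOver ν (ν a)) (hb : IsTorsionOver ν (ν b))
    (hij : i < j) (hfin : ν (a * q ^ i) ≠ ⊤) : ν (a * q ^ i) ≠ ν (b * q ^ j) := by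
  intro h
  obtain ⟨k, rfl⟩ := Nat.exists_eq_add_of_lt hij
  simp only [ν.map_mul, ν.map_pow] at h hfin
  have hsplit : ν a = ν b + (k + 1) • ν q :=
    WithTop.add_right_cancel (WithTop.add_ne_top.1 hfin).2 (by
      rw [h, add_assoc (ν b), ← add_nsmul]
      congr 2
      omega)
  exact hq (((hsplit ▸ ha).right_of_add hb).of_nsmul k.succ_pos)

/-- If `ν(q)` is torsion-free over `νK` while every polynomial of degree
smaller than `deg q` has value torsion over `νK`, then `ν` equals its truncation `ν_q`. -/
theorem stmt0 (ν : AddValuation (Polynomial K) (WithTop Γ)) (q : Polynomial K)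
    (hq : 0 < q.natDegree)
    (htf : ∀ n : ℕ, 0 < n → ∀ c : K, c ≠ 0 → n • ν q ≠ ν (C c))
    (htor : ∀ f : Polynomial K, f ≠ 0 → f.natDegree < q.natDegree →
      ∃ n : ℕ, 0 < n ∧ ∃ c : K, c ≠ 0 ∧ n • ν f = ν (C c)) :
    ∀ f : Polynomial K, ν f = trunc (⇑ν) q f := by
  intro f
  have hqt : ¬ IsTorsionOver ν (ν q) := fun ⟨n, hn, c, hc, h⟩ => htf n hn c hc h
  have hcoeff : ∀ i, qCoeff q f i ≠ 0 → IsTorsionOver ν (ν (qCoeff q f i)) :=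
    fun i hi => htor _ hi (natDegree_mod_lt _ hq.ne')
  conv_lhs => rw [← sum_qCoeff_mul_pow (natDegree_pos_iff_degree_pos.1 hq)
    (degree_le_natDegree.trans_lt (WithBot.coe_lt_coe.2 f.natDegree.lt_succ_self))]
  refine ν.map_sum_eq_inf fun i _ j _ hij hfin => ?_
  have hi : qCoeff q f i ≠ 0 := by rintro h; simp [h] at hfin
  rcases eq_or_ne (qCoeff q f j) 0 with hj | hj
  · simpa [hj] using hfin
  rcases hij.lt_or_gt with h | h
  · exact val_mul_pow_ne_of_lt hqt (hcoeff i hi) (hcoeff j hj) h hfin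
  · exact fun heq => val_mul_pow_ne_of_lt hqt (hcoeff j hj) (hcoeff i hi) h (heq ▸ hfin) heq.symm
end

section
/- Let μ be a valuation on K̄[x] with K̄ algebraically closed, a ∈ K̄, and δ = μ(x−a). Then the pair (a, δ) is a pair of definition for μ (i.e., μ equals the monomial valuation μ_{a,δ}) if and only if μ(x−a) ≥ μ(x−c) for every c ∈ K̄. -/
/-! The truncation `μ_{a,δ}` is the minimum of `μ` over the terms of the Taylor expansion at `a`,
so `μ_{a,δ} ≤ μ` always by the ultrametric inequality. For the converse, the polynomials whose
value is at most that of each of their Taylor terms form a multiplicative monoid: the Taylor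
coefficients of `p q` are sums of products of those of `p` and `q`. This monoid contains the
constants, and, when `μ(x - a)` is maximal, every `x - c`, because
`μ(x - c) ≤ min(μ(x - a), μ(a - c))`. Over an algebraically closed field these generate all
polynomials. -/

open Polynomial

variable {K : Type*} [Field K] {Γ : Type*} [AddCommGroup Γ] [LinearOrder Γ] [IsOrderedAddMonoid Γ]

section TaylorTerms

variable {R : Type*} [CommRing R] {Γ₀ : Type*} [LinearOrderedAddCommMonoidWithTop Γ₀]
  (v : AddValuation R[X] Γ₀) (a : R)

def taylorTermBounded : Submonoid R[X] where
  carrier := {p | ∀ i, v p ≤ v (C ((taylor a p).coeff i) * (X - C a) ^ i)}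
  one_mem' := by
    rintro (_ | i) <;> simp [coeff_one]
  mul_mem' := by
    intro p q hp hq i
    have hterm : ∀ jk ∈ Finset.HasAntidiagonal.antidiagonal i, v (p * q) ≤
        v (C ((taylor a p).coeff jk.1 * (taylor a q).coeff jk.2) * (X - C a) ^ i) := by
      rintro ⟨j, k⟩ hjk
      rw [Finset.HasAntidiagonal.mem_antidiagonal] at hjk
      calc v (p * q) = v p + v q := v.map_mul p q
        _ ≤ v (C ((taylor a p).coeff j) * (X - C a) ^ j)
            + v (C ((taylor a q).coeff k) * (X - C a) ^ k) := add_le_add (hp j) (hq k)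
        _ = _ := by rw [← v.map_mul, ← hjk, C_mul, pow_add]; ring_nf
    simpa only [taylor_mul, coeff_mul, map_sum, Finset.sum_mul] using v.map_le_sum hterm

theorem C_mem_taylorTermBounded (c : R) : C c ∈ taylorTermBounded v a := by
  rintro (_ | i) <;> simp

variable {v a}

theorem X_add_C_mem_taylorTermBounded {b : R} (hb : v (X + C b) ≤ v (X - C a)) :
    X + C b ∈ taylorTermBounded v a := by
  have hconst : v (X + C b) ≤ v (C (a + b)) := by
    have : C (a + b) = (X + C b) - (X - C a) := by rw [C_add]; ring
    rw [this]
    exact (le_min le_rfl hb).trans (v.map_sub _ _)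
  have htaylor : taylor a (X + C b) = X + C (a + b) := by
    rw [map_add, taylor_X, taylor_C, C_add]; ring
  rintro (_ | _ | i)
  · simpa [htaylor] using hconst
  · simpa [htaylor] using hb
  · simp [htaylor, coeff_X]

theorem mem_taylorTermBounded_of_splits (H : ∀ c, v (X - C c) ≤ v (X - C a)) {p : R[X]}
    (hp : p.Splits) : p ∈ taylorTermBounded v a := by
  refine Submonoid.closure_le.2 ?_ hp
  rintro _ (⟨c, rfl⟩ | ⟨b, rfl⟩)
  · exact C_mem_taylorTermBounded v a c
  · exact X_add_C_mem_taylorTermBounded (by simpa only [map_neg, sub_neg_eq_add] using H (-b))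

end TaylorTerms

theorem qCoeff_X_sub_C (a : K) (f : K[X]) (i : ℕ) :
    qCoeff (X - C a) f i = C ((taylor a f).coeff i) := by
  have hmonic : ((X - C a) ^ i).Monic := (monic_X_sub_C a).pow i
  have hrem : (taylor a (f %ₘ (X - C a) ^ i)).degree < i := by
    rw [degree_taylor]
    simpa using degree_modByMonic_lt f hmonic
  rw [qCoeff, ← divByMonic_eq_div f hmonic, ← modByMonic_eq_mod _ (monic_X_sub_C a),
    modByMonic_X_sub_C_eq_C_eval]
  conv_rhs => rw [← modByMonic_add_div f ((X - C a) ^ i)]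
  rw [map_add, taylor_mul, taylor_pow, coeff_add, coeff_eq_zero_of_degree_lt hrem, zero_add]
  simp [coeff_X_pow_mul', taylor_coeff_zero]

theorem sum_qCoeff_X_sub_C_mul_pow (a : K) (f : K[X]) :
    ∑ i ∈ Finset.range (f.natDegree + 1), qCoeff (X - C a) f i * (X - C a) ^ i = f := by
  simp_rw [qCoeff_X_sub_C]
  conv_rhs => rw [← sum_taylor_eq f a, sum_over_range _ (by simp), natDegree_taylor]

section Trunc

variable (μ : AddValuation K[X] (WithTop Γ)) (a : K)

theorem trunc_X_sub_C_le (f : K[X]) : trunc μ (X - C a) f ≤ μ f := by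
  conv_rhs => rw [← sum_qCoeff_X_sub_C_mul_pow a f]
  exact μ.map_le_sum fun i hi => Finset.inf_le hi

theorem le_trunc_X_sub_C {f : K[X]} (hf : f ∈ taylorTermBounded μ a) :
    μ f ≤ trunc μ (X - C a) f :=
  Finset.le_inf fun i _ => by simpa only [qCoeff_X_sub_C] using hf i

theorem trunc_X_sub_C_X_sub_C_le (c : K) : trunc μ (X - C a) (X - C c) ≤ μ (X - C a) := by
  have hcoeff : (taylor a (X - C c)).coeff 1 = 1 := by simp [coeff_X]
  calc trunc μ (X - C a) (X - C c) ≤ μ (qCoeff (X - C a) (X - C c) 1 * (X - C a) ^ 1) :=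
        Finset.inf_le (by simp)
    _ = μ (X - C a) := by rw [qCoeff_X_sub_C, hcoeff, C_1, one_mul, pow_one]

end Trunc

/-- `(a, μ(x-a))` is a pair of definition for `μ` (i.e. `μ` equals the
monomial/truncation valuation `μ_{x-a}`) iff `μ(x-a) ≥ μ(x-c)` for every `c`. -/
theorem stmt2 [IsAlgClosed K] (μ : AddValuation (Polynomial K) (WithTop Γ)) (a : K) :
    (∀ p : Polynomial K, trunc (⇑μ) (X - C a) p = μ p) ↔
      ∀ c : K, μ (X - C c) ≤ μ (X - C a) := by
  refine ⟨fun h c => ?_, fun H p => ?_⟩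
  · simpa only [h] using trunc_X_sub_C_X_sub_C_le μ a c
  · exact le_antisymm (trunc_X_sub_C_le μ a p)
      (le_trunc_X_sub_C μ a (mem_taylorTermBounded_of_splits H (IsAlgClosed.splits p)))
end

section
/- Let μ be a valuation on K̄[x] extending a Krull valuation ν on K[x], and let (a,γ) be a minimal pair for μ with γ = μ(x−a). Then for every f ∈ K[x] with deg(f) < [K(a):K], the maximum δ(f) of μ(x−b) over all roots b ∈ K̄ of f satisfies δ(f) < γ. -/
open Polynomial

variable {K : Type*} [Field K] {Γ : Type*} [AddCommGroup Γ] [LinearOrder Γ] [IsOrderedAddMonoid Γ]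

theorem AddValuation.le_map_C_sub_C {R Γ₀ : Type*} [CommRing R]
    [LinearOrderedAddCommMonoidWithTop Γ₀] (v : AddValuation R[X] Γ₀) {a b : R} {γ : Γ₀}
    (ha : γ ≤ v (X - C a)) (hb : γ ≤ v (X - C b)) : γ ≤ v (C b - C a) := by
  rw [show C b - C a = (X - C a) - (X - C b) by ring]
  exact v.map_le_sub ha hb

theorem minpoly.natDegree_le_of_aeval_eq_zero {A B : Type*} [Field A] [Ring B] [Algebra A B]
    {x : B} {p : A[X]} (hp0 : p ≠ 0) (hp : Polynomial.aeval x p = 0) :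
    (minpoly A x).natDegree ≤ p.natDegree :=
  natDegree_le_of_dvd (minpoly.dvd A x hp) hp0

theorem stmt5_general {L : Type*} [Field L] [Algebra K L]
    (μ : AddValuation (Polynomial L) (WithTop Γ))
    (a : L) (γ : WithTop Γ) (hγ : γ = μ (X - C a))
    (hmin : ∀ b : L, γ ≤ μ (C b - C a) →
      (minpoly K a).natDegree ≤ (minpoly K b).natDegree)
    (f : Polynomial K) (hf0 : 0 < f.natDegree)
    (hdeg : f.natDegree < (minpoly K a).natDegree) :
    ∀ b : L, Polynomial.aeval b f = 0 → μ (X - C b) < γ := by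
  intro b hb
  by_contra! hγb
  have hab : γ ≤ μ (C b - C a) := μ.le_map_C_sub_C hγ.le hγb
  have hdeg_b := minpoly.natDegree_le_of_aeval_eq_zero (ne_zero_of_natDegree_gt hf0) hb
  have hdeg_ab := hmin b hab
  omega

/-- If `(a, γ)` is a minimal pair for `μ` with `γ = μ(x-a)`, then every
`f ∈ K[x]` with `deg f < [K(a):K]` satisfies `δ(f) < γ`, i.e. `μ(x-b) < γ` for every
root `b` of `f`. -/
theorem stmt5 {L : Type*} [Field L] [Algebra K L] [IsAlgClosure K L]
    (ν : AddValuation (Polynomial K) (WithTop Γ)) (μ : AddValuation (Polynomial L) (WithTop Γ))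
    (hKrull : ∀ p : Polynomial K, p ≠ 0 → ν p ≠ ⊤)
    (hext : ∀ p : Polynomial K, ν p = μ (p.map (algebraMap K L)))
    (a : L) (γ : WithTop Γ) (hγ : γ = μ (X - C a))
    (hmin : ∀ b : L, γ ≤ μ (C b - C a) →
      (minpoly K a).natDegree ≤ (minpoly K b).natDegree)
    (f : Polynomial K) (hf0 : 0 < f.natDegree)
    (hdeg : f.natDegree < (minpoly K a).natDegree) :
    ∀ b : L, Polynomial.aeval b f = 0 → μ (X - C b) < γ :=
  stmt5_general μ a γ hγ hmin f hf0 hdeg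
end

section
/- Let ν be a valuation on K[x] and Q a key polynomial for ν. Then Q is also a key polynomial for the truncation ν_Q. -/
/-!
The truncation `ν_Q` agrees with `ν` on `Q` and on every polynomial of degree `< deg Q`, hence on
all Hasse derivatives of `Q` and of any `f` with `deg f < deg Q`. So for such `f` the data entering
`ε(f) ≥ ε(Q)` are the same for `ν_Q` and `ν`, and `Q` being key for `ν` forbids it. The one
exception is `f` generating the support of `ν_Q`: then `ν f = ⊤`, so the generator of the support
of `ν`, whose `ε` is infinite, divides `f` and already has degree `≥ deg Q`.
-/

open Polynomial

variable {K : Type*} [Field K] {Γ : Type*} [AddCommGroup Γ] [LinearOrder Γ] [IsOrderedAddMonoid Γ]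

lemma qCoeff_eq_zero_of_natDegree_lt {q f : K[X]} {i : ℕ} (h : f.natDegree < (q ^ i).natDegree) :
    qCoeff q f i = 0 := by
  rw [qCoeff, (Polynomial.div_eq_zero_iff (ne_zero_of_natDegree_gt h)).2 (degree_lt_degree h),
    EuclideanDomain.zero_mod]

lemma qCoeff_zero_of_natDegree_lt {q f : K[X]} (h : f.natDegree < q.natDegree) :
    qCoeff q f 0 = f := by
  rw [qCoeff, pow_zero, EuclideanDomain.div_one,
    mod_eq_self_iff (ne_zero_of_natDegree_gt h)]
  exact degree_lt_degree h

lemma qCoeff_self_zero (q : K[X]) : qCoeff q q 0 = 0 := by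
  rw [qCoeff, pow_zero, EuclideanDomain.div_one, EuclideanDomain.mod_self]

lemma qCoeff_self_one {q : K[X]} (hq : 0 < q.natDegree) : qCoeff q q 1 = 1 := by
  rw [qCoeff, pow_one, EuclideanDomain.div_self (ne_zero_of_natDegree_gt hq),
    mod_eq_self_iff (ne_zero_of_natDegree_gt hq)]
  exact degree_lt_degree (by simpa using hq)

lemma trunc_eq_of_single_qCoeff (ν : AddValuation K[X] (WithTop Γ)) {q f : K[X]} {k : ℕ}
    (hk : k ≤ f.natDegree) (hf : qCoeff q f k * q ^ k = f) (hzero : ∀ i ≠ k, qCoeff q f i = 0) :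
    trunc ν q f = ν f := by
  refine le_antisymm ?_ (Finset.le_inf fun i _ => ?_)
  · conv_rhs => rw [← hf]
    exact Finset.inf_le (Finset.mem_range_succ_iff.2 hk)
  rcases eq_or_ne i k with rfl | hi
  · rw [hf]
  · rw [hzero i hi, zero_mul, AddValuation.map_zero]
    exact le_top

lemma trunc_of_natDegree_lt (ν : AddValuation K[X] (WithTop Γ)) {q f : K[X]}
    (h : f.natDegree < q.natDegree) : trunc ν q f = ν f := by
  refine trunc_eq_of_single_qCoeff ν (Nat.zero_le _)
    (by rw [qCoeff_zero_of_natDegree_lt h, pow_zero, mul_one]) fun i hi => ?_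
  refine qCoeff_eq_zero_of_natDegree_lt (h.trans_le ?_)
  rw [natDegree_pow]
  exact Nat.le_mul_of_pos_left _ (Nat.pos_of_ne_zero hi)

lemma trunc_self (ν : AddValuation K[X] (WithTop Γ)) {q : K[X]} (hq : 0 < q.natDegree) :
    trunc ν q q = ν q := by
  refine trunc_eq_of_single_qCoeff ν hq (by rw [qCoeff_self_one hq, one_mul, pow_one])
    fun i hi => ?_
  rcases Nat.lt_or_gt_of_ne hi with hi | hi
  · rw [Nat.lt_one_iff.1 hi, qCoeff_self_zero]
  · refine qCoeff_eq_zero_of_natDegree_lt ?_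
    rw [natDegree_pow]
    exact lt_mul_left hq hi

lemma trunc_hasseDeriv_of_natDegree_lt (ν : AddValuation K[X] (WithTop Γ)) {q f : K[X]}
    (h : f.natDegree < q.natDegree) (b : ℕ) :
    trunc ν q (hasseDeriv b f) = ν (hasseDeriv b f) :=
  trunc_of_natDegree_lt ν (((natDegree_hasseDeriv_le f b).trans (Nat.sub_le _ _)).trans_lt h)

lemma trunc_hasseDeriv_self (ν : AddValuation K[X] (WithTop Γ)) {q : K[X]}
    (hq : 0 < q.natDegree) (c : ℕ) :
    trunc ν q (hasseDeriv c q) = ν (hasseDeriv c q) := by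
  rcases Nat.eq_zero_or_pos c with rfl | hc
  · rw [hasseDeriv_zero']
    exact trunc_self ν hq
  · exact trunc_of_natDegree_lt ν ((natDegree_hasseDeriv_le q c).trans_lt (Nat.sub_lt hq hc))

lemma isGenSupp_trunc (ν : AddValuation K[X] (WithTop Γ)) {q : K[X]} (h : IsGenSupp ν q) :
    IsGenSupp (trunc ν q) q := by
  intro g
  rw [trunc, Finset.inf_eq_top_iff]
  constructor
  · intro hg
    have h0 := hg 0 (Finset.mem_range.2 (Nat.succ_pos _))
    rwa [qCoeff, pow_zero, EuclideanDomain.div_one, mul_one, h,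
      EuclideanDomain.dvd_mod_iff dvd_rfl] at h0
  · intro hg i _
    refine (h _).2 ?_
    rcases Nat.eq_zero_or_pos i with rfl | hi
    · rw [qCoeff, pow_zero, EuclideanDomain.div_one, mul_one, EuclideanDomain.dvd_mod_iff dvd_rfl]
      exact hg
    · exact dvd_mul_of_dvd_right (dvd_pow_self q hi.ne') _

lemma isGenSupp_generator_supp (ν : AddValuation K[X] (WithTop Γ)) :
    IsGenSupp ν (Submodule.IsPrincipal.generator ν.supp) := fun g => by
  rw [← AddValuation.mem_supp_iff, Submodule.IsPrincipal.mem_iff_generator_dvd]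

section Congr

variable {Λ : Type*} {w w' : K[X] → WithTop Λ}

lemma validIdx_congr {f : K[X]} (h : ∀ b, w (hasseDeriv b f) = w' (hasseDeriv b f)) (b : ℕ) :
    ValidIdx w f b ↔ ValidIdx w' f b := by
  have h0 := h 0
  rw [hasseDeriv_zero'] at h0
  rw [ValidIdx, ValidIdx, h0, h b]

lemma ratioLE_congr [AddCommGroup Λ] [LinearOrder Λ] {g f : K[X]}
    (hg : ∀ c, w (hasseDeriv c g) = w' (hasseDeriv c g))
    (hf : ∀ b, w (hasseDeriv b f) = w' (hasseDeriv b f)) (c b : ℕ) :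
    RatioLE w g c f b ↔ RatioLE w' g c f b := by
  have hg0 := hg 0
  have hf0 := hf 0
  rw [hasseDeriv_zero'] at hg0 hf0
  rw [RatioLE, RatioLE, hg0, hf0, hg c, hf b]

end Congr

/-- If `Q` is a key polynomial for `ν`, then `Q` is a key polynomial for
the truncation `ν_Q`. -/
theorem stmt8 (ν : AddValuation (Polynomial K) (WithTop Γ)) (Q : Polynomial K)
    (hQ : IsKeyPoly (⇑ν) Q) :
    IsKeyPoly (trunc (⇑ν) Q) Q := by
  obtain ⟨hm, hkey⟩ := hQ
  refine ⟨hm, fun f hf hE => ?_⟩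
  by_contra! hdeg
  rcases hE with hgen | ⟨hnQ, hE⟩
  · obtain ⟨p, hp⟩ : ∃ p, IsGenSupp ν p := ⟨_, isGenSupp_generator_supp ν⟩
    have hpf : p ∣ f := by
      rw [← hp, ← trunc_of_natDegree_lt ν hdeg]
      exact (hgen f).2 dvd_rfl
    exact (hkey p (ne_zero_of_dvd_ne_zero hf hpf) (.inl hp)).not_gt
      ((natDegree_le_of_dvd hpf hf).trans_lt hdeg)
  · have hf' := trunc_hasseDeriv_of_natDegree_lt ν hdeg
    have hQ' := trunc_hasseDeriv_self ν ((Nat.zero_le _).trans_lt hdeg)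
    refine (hkey f hf (.inr ⟨mt (isGenSupp_trunc ν) hnQ, ?_⟩)).not_gt hdeg
    simpa only [validIdx_congr hf', validIdx_congr hQ', ratioLE_congr hQ' hf'] using hE
end

section
/- Let ν be a Krull valuation on K[x], μ an extension to K̄[x], f ∈ K[x] non-constant with optimizing root a ∈ K̄. Then ν(f) lies in the value group μK̄ if and only if δ(f) = μ(x−a) lies in μK̄. -/
open Polynomial

variable {K : Type*} [Field K] {Γ : Type*} [AddCommGroup Γ] [LinearOrder Γ] [IsOrderedAddMonoid Γ]

/-!
Over `K̄` the polynomial `f` splits as `lc(f) · ∏ (x - b)`. For a root `b` write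
`x - b = (x - a) + (a - b)`: either `μ(a - b) < δ(f)`, and then `μ(x - b) = μ(a - b) ∈ μK̄`, or
`μ(x - b) ≥ δ(f)`, and then `μ(x - b) = δ(f)` by optimality of `a`. Hence
`ν(f) = n δ(f) + γ` with `n ≥ 1` (the root `a` itself contributes) and `γ ∈ μK̄`. Since `K̄` is
algebraically closed, `μK̄` is divisible, so `n δ(f) ∈ μK̄` iff `δ(f) ∈ μK̄`.
-/

namespace AddValuation

variable {L : Type*} [Field L] (μ : AddValuation L[X] (WithTop Γ))

/-- `v` lies in the value group `μK̄` of `μ` restricted to the constants. -/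
def IsConstValue (v : WithTop Γ) : Prop :=
  ∃ c : L, c ≠ 0 ∧ v = μ (C c)

/-- `a` is an optimizing root of `g`: a root attaining `δ(g) = max μ(x - b)` over the roots `b`. -/
def IsOptimizingRoot (g : L[X]) (a : L) : Prop :=
  a ∈ g.roots ∧ ∀ b ∈ g.roots, μ (X - C b) ≤ μ (X - C a)

namespace IsConstValue

variable {μ} {v w : WithTop Γ}

lemma ne_top (hv : IsConstValue μ v) : v ≠ ⊤ := by
  obtain ⟨c, hc, rfl⟩ := hv
  exact (μ.comap C).ne_top_iff.mpr hc

lemma zero : IsConstValue μ 0 :=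
  ⟨1, one_ne_zero, by rw [C_1, μ.map_one]⟩

lemma add (hv : IsConstValue μ v) (hw : IsConstValue μ w) : IsConstValue μ (v + w) := by
  obtain ⟨c, hc, rfl⟩ := hv
  obtain ⟨d, hd, rfl⟩ := hw
  exact ⟨c * d, mul_ne_zero hc hd, by rw [C_mul, μ.map_mul]⟩

lemma nsmul (hv : IsConstValue μ v) (n : ℕ) : IsConstValue μ (n • v) := by
  obtain ⟨c, hc, rfl⟩ := hv
  exact ⟨c ^ n, pow_ne_zero n hc, by rw [C_pow, μ.map_pow]⟩

lemma of_add_right (hvw : IsConstValue μ (v + w)) (hw : IsConstValue μ w) :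
    IsConstValue μ v := by
  obtain ⟨c, hc, hcv⟩ := hvw
  have hw_ne_top := hw.ne_top
  obtain ⟨d, hd, rfl⟩ := hw
  refine ⟨c / d, div_ne_zero hc hd, WithTop.add_right_cancel hw_ne_top ?_⟩
  rw [hcv, ← μ.map_mul, ← C_mul, div_mul_cancel₀ c hd]

lemma of_nsmul [IsAlgClosed L] {n : ℕ} (hn : n ≠ 0) (hv : IsConstValue μ (n • v)) :
    IsConstValue μ v := by
  obtain ⟨c, hc, hcv⟩ := hv
  obtain ⟨d, rfl⟩ := IsAlgClosed.exists_pow_nat_eq c (Nat.pos_of_ne_zero hn)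
  have hd : d ≠ 0 := ne_zero_pow hn hc
  refine ⟨d, hd, ?_⟩
  rw [C_pow, μ.map_pow] at hcv
  lift μ (C d) to Γ using ne_top (μ := μ) ⟨d, hd, rfl⟩ with γ
  have hv : v ≠ ⊤ := by
    rintro rfl
    obtain ⟨m, rfl⟩ := Nat.exists_eq_succ_of_ne_zero hn
    rw [succ_nsmul, WithTop.add_top, ← WithTop.coe_nsmul] at hcv
    exact WithTop.top_ne_coe hcv
  lift v to Γ using hv with β
  rw [← WithTop.coe_nsmul, ← WithTop.coe_nsmul, WithTop.coe_inj] at hcv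
  exact congrArg _ (nsmul_right_injective hn hcv)

end IsConstValue

lemma isConstValue_nsmul_add_iff [IsAlgClosed L] {n : ℕ} (hn : n ≠ 0) {v w : WithTop Γ}
    (hw : IsConstValue μ w) : IsConstValue μ (n • v + w) ↔ IsConstValue μ v :=
  ⟨fun h => (h.of_add_right hw).of_nsmul hn, fun h => (h.nsmul n).add hw⟩

lemma map_X_sub_C_eq_or_isConstValue {a b : L} (hab : μ (X - C b) ≤ μ (X - C a)) :
    μ (X - C b) = μ (X - C a) ∨ IsConstValue μ (μ (X - C b)) := by
  have hsplit : X - C b = (X - C a) + C (a - b) := by rw [C_sub]; ring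
  rcases lt_or_ge (μ (C (a - b))) (μ (X - C a)) with h | h
  · refine .inr ⟨a - b, ?_, by rw [hsplit, μ.map_add_eq_of_lt_right h]⟩
    rintro hab0
    rw [hab0, C_0, μ.map_zero] at h
    exact not_top_lt h
  · exact .inl (le_antisymm hab (hsplit ▸ μ.map_le_add le_rfl h))

lemma exists_map_prod_X_sub_C_eq_nsmul_add {δ : WithTop Γ} (S : Multiset L)
    (hS : ∀ b ∈ S, μ (X - C b) = δ ∨ IsConstValue μ (μ (X - C b))) :
    ∃ k : ℕ, ∃ w, IsConstValue μ w ∧ μ (S.map fun b => X - C b).prod = k • δ + w := by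
  induction S using Multiset.induction_on with
  | empty => exact ⟨0, 0, .zero, by simp⟩
  | cons b S ih =>
    obtain ⟨k, w, hw, hkw⟩ := ih fun x hx => hS x (Multiset.mem_cons_of_mem hx)
    rw [Multiset.map_cons, Multiset.prod_cons, μ.map_mul, hkw]
    rcases hS b (Multiset.mem_cons_self b S) with hb | hb
    · exact ⟨k + 1, w, hw, by rw [hb, succ_nsmul', add_assoc]⟩
    · exact ⟨k, _, hb.add hw, add_left_comm _ _ _⟩

lemma IsOptimizingRoot.exists_map_eq_nsmul_add [IsAlgClosed L] {g : L[X]} (hg : g ≠ 0) {a : L}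
    (ha : μ.IsOptimizingRoot g a) :
    ∃ n : ℕ, n ≠ 0 ∧ ∃ w, IsConstValue μ w ∧ μ g = n • μ (X - C a) + w := by
  obtain ⟨R, hR⟩ := Multiset.exists_cons_of_mem ha.1
  obtain ⟨k, w, hw, hkw⟩ := μ.exists_map_prod_X_sub_C_eq_nsmul_add R fun b hb =>
    μ.map_X_sub_C_eq_or_isConstValue (ha.2 b (hR ▸ Multiset.mem_cons_of_mem hb))
  have hlc : IsConstValue μ (μ (C g.leadingCoeff)) := ⟨_, leadingCoeff_ne_zero.mpr hg, rfl⟩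
  refine ⟨k + 1, k.succ_ne_zero, _, hw.add hlc, ?_⟩
  conv_lhs => rw [(IsAlgClosed.splits g).eq_prod_roots, hR]
  rw [μ.map_mul, Multiset.map_cons, Multiset.prod_cons, μ.map_mul, hkw, succ_nsmul']
  abel

end AddValuation

open AddValuation in
theorem stmt11_general {L : Type*} [Field L] [Algebra K L] [IsAlgClosure K L]
    (ν : AddValuation (Polynomial K) (WithTop Γ)) (μ : AddValuation (Polynomial L) (WithTop Γ))
    (hext : ∀ p : Polynomial K, ν p = μ (p.map (algebraMap K L)))
    (f : Polynomial K) (hf : 0 < f.natDegree)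
    (a : L) (ha : Polynomial.aeval a f = 0)
    (hopt : ∀ b : L, Polynomial.aeval b f = 0 → μ (X - C b) ≤ μ (X - C a)) :
    (∃ c : L, c ≠ 0 ∧ ν f = μ (C c)) ↔ (∃ c : L, c ≠ 0 ∧ μ (X - C a) = μ (C c)) := by
  have : IsAlgClosed L := IsAlgClosure.isAlgClosed K
  have hf0 : f ≠ 0 := ne_zero_of_natDegree_gt hf
  have hroots (b : L) : b ∈ (f.map (algebraMap K L)).roots ↔ aeval b f = 0 := by
    rw [mem_roots_map_of_injective (algebraMap K L).injective hf0, aeval_def]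
  obtain ⟨n, hn, w, hw, hfw⟩ := IsOptimizingRoot.exists_map_eq_nsmul_add μ
    (Polynomial.map_ne_zero hf0) ⟨(hroots a).mpr ha, fun b hb => hopt b ((hroots b).mp hb)⟩
  change IsConstValue μ (ν f) ↔ IsConstValue μ (μ (X - C a))
  rw [hext f, hfw]
  exact μ.isConstValue_nsmul_add_iff hn hw

/-- For `f ∈ K[x]` with optimizing root `a`, `ν(f) ∈ μK̄` iff
`δ(f) = μ(x-a) ∈ μK̄`. -/
theorem stmt11 {L : Type*} [Field L] [Algebra K L] [IsAlgClosure K L]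
    (ν : AddValuation (Polynomial K) (WithTop Γ)) (μ : AddValuation (Polynomial L) (WithTop Γ))
    (hKrull : ∀ p : Polynomial K, p ≠ 0 → ν p ≠ ⊤)
    (hext : ∀ p : Polynomial K, ν p = μ (p.map (algebraMap K L)))
    (f : Polynomial K) (hf : 0 < f.natDegree)
    (a : L) (ha : Polynomial.aeval a f = 0)
    (hopt : ∀ b : L, Polynomial.aeval b f = 0 → μ (X - C b) ≤ μ (X - C a)) :
    (∃ c : L, c ≠ 0 ∧ ν f = μ (C c)) ↔ (∃ c : L, c ≠ 0 ∧ μ (X - C a) = μ (C c)) :=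
  stmt11_general ν μ hext f hf a ha hopt
end

section
/- Let ν be a valuation on K[x]. Suppose there exist q ∈ K[x] and a ∈ K such that the residue ξ of q/a under ν (extended to K(x)) is transcendental over the residue field Kν. Then for all a_0,...,a_s ∈ K, ν(a_0 + a_1 q + ... + a_s q^s) = min_{0≤i≤s} ν(a_i q^i). -/
/-!
Let `j` realise the minimum `m = ν(c_j qʲ)` and suppose `ν(Σ cᵢ qⁱ) > m`. Dividing by
`c_j aʲ` gives coefficients `bᵢ = cᵢ aⁱ / (c_j aʲ)` of nonnegative value with `b_j = 1`, and
`Σ bᵢ qⁱ a^{s-i}` has value `> ν(aˢ)`: after division by `aˢ` this is a nontrivial algebraic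
relation `Σ (bᵢν) ξⁱ = 0`, impossible when `ξ` is transcendental over `Kν`.
-/

open Polynomial

variable {K : Type*} [Field K] {Γ : Type*} [AddCommGroup Γ] [LinearOrder Γ] [IsOrderedAddMonoid Γ]

open Finset

theorem AddValuation.map_ne_top_of_isUnit {R : Type*} [CommRing R]
    (v : AddValuation R (WithTop Γ)) {u : R} (hu : IsUnit u) : v u ≠ ⊤ := by
  obtain ⟨u, rfl⟩ := hu
  intro h
  have h1 := v.map_mul u ↑u⁻¹
  rw [u.mul_inv, v.map_one, h, top_add] at h1
  exact WithTop.top_ne_zero h1.symm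

namespace AddValuation

variable (ν : AddValuation K[X] (WithTop Γ))

theorem map_C_ne_top {x : K} (hx : x ≠ 0) : ν (C x) ≠ ⊤ :=
  ν.map_ne_top_of_isUnit (isUnit_C.mpr hx.isUnit)

theorem map_C_div_nonneg {x y : K} (hx : x ≠ 0) (h : ν (C x) ≤ ν (C y)) :
    0 ≤ ν (C (y / x)) := by
  have hsplit : ν (C (y / x)) + ν (C x) = ν (C y) := by
    rw [← ν.map_mul, ← C_mul, div_mul_cancel₀ _ hx]
  rwa [← WithTop.add_le_add_iff_right (ν.map_C_ne_top hx), zero_add, hsplit]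

theorem map_C_mul_pow_of_eq {q : K[X]} {a : K} (hval : ν q = ν (C a)) (c : K) (i : ℕ) :
    ν (C c * q ^ i) = ν (C (c * a ^ i)) := by
  rw [C_mul, C_pow, ν.map_mul, ν.map_mul, ν.map_pow, ν.map_pow, hval]

end AddValuation

theorem C_mul_sum_homogenize {d : K} (hd : d ≠ 0) (q : K[X]) (a : K) (c : ℕ → K) (s : ℕ) :
    C d * ∑ i ∈ range (s + 1), C (c i * a ^ i / d) * q ^ i * C a ^ (s - i) =
      C a ^ s * ∑ i ∈ range (s + 1), C (c i) * q ^ i := by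
  rw [mul_sum, mul_sum]
  refine sum_congr rfl fun i hi => ?_
  calc C d * (C (c i * a ^ i / d) * q ^ i * C a ^ (s - i))
      = C (d * (c i * a ^ i / d)) * q ^ i * C a ^ (s - i) := by rw [C_mul]; ring
    _ = C a ^ s * (C (c i) * q ^ i) := by
      rw [mul_div_cancel₀ _ hd, ← pow_mul_pow_sub (C a) (mem_range_succ_iff.mp hi), C_mul,
        C_pow]
      ring

/-- Dividing by `aˢ`, the premise says that `Σ (bᵢν) ξⁱ = 0` for `ξ = (q/a)ν`. -/
def ResidueTranscendental (ν : AddValuation K[X] (WithTop Γ)) (q : K[X]) (a : K) : Prop :=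
  ∀ (s : ℕ) (b : ℕ → K), (∀ i, i ≤ s → 0 ≤ ν (C (b i))) →
    ν (C a ^ s) < ν (∑ i ∈ range (s + 1), C (b i) * q ^ i * C a ^ (s - i)) →
    ∀ i, i ≤ s → 0 < ν (C (b i))

theorem ResidueTranscendental.map_sum_le_of_isMin {ν : AddValuation K[X] (WithTop Γ)}
    {q : K[X]} {a : K} (htr : ResidueTranscendental ν q a) (ha : a ≠ 0)
    (hval : ν q = ν (C a)) {s j : ℕ} (hj : j ≤ s) {c : ℕ → K}
    (hmin : ∀ i ≤ s, ν (C (c j) * q ^ j) ≤ ν (C (c i) * q ^ i)) :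
    ν (∑ i ∈ range (s + 1), C (c i) * q ^ i) ≤ ν (C (c j) * q ^ j) := by
  by_cases hcj : c j = 0
  · simp [hcj]
  by_contra! hlt
  set d := c j * a ^ j
  have hd : d ≠ 0 := mul_ne_zero hcj (pow_ne_zero j ha)
  rw [ν.map_C_mul_pow_of_eq hval] at hlt
  have hb_nonneg : ∀ i ≤ s, 0 ≤ ν (C (c i * a ^ i / d)) := fun i hi =>
    ν.map_C_div_nonneg hd (by simpa only [ν.map_C_mul_pow_of_eq hval] using hmin i hi)
  have hb_lt :
      ν (C a ^ s) < ν (∑ i ∈ range (s + 1), C (c i * a ^ i / d) * q ^ i * C a ^ (s - i)) := by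
    have hsplit := congrArg ν (C_mul_sum_homogenize hd q a c s)
    rw [ν.map_mul, ν.map_mul] at hsplit
    have hAs : ν (C a ^ s) ≠ ⊤ := by rw [← C_pow]; exact ν.map_C_ne_top (pow_ne_zero s ha)
    rw [← WithTop.add_lt_add_iff_left (ν.map_C_ne_top hd), hsplit, add_comm]
    exact WithTop.add_lt_add_left hAs hlt
  have hbj : 0 < ν (C (d / d)) := htr s _ hb_nonneg hb_lt j hj
  rw [div_self hd, C_1, ν.map_one] at hbj
  exact lt_irrefl 0 hbj

/-- If the residue of `q/a` under `ν` is transcendental over `Kν`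
(encoded: whenever `b_0,…,b_s` have nonnegative value and
`ν(Σ b_i q^i a^{s-i}) > ν(a^s)`, all residues `b_iν` vanish), then
`ν(Σ c_i q^i) = min_i ν(c_i q^i)` for all `c_0,…,c_s ∈ K`. -/
theorem stmt12 (ν : AddValuation (Polynomial K) (WithTop Γ)) (q : Polynomial K) (a : K)
    (ha : a ≠ 0) (hval : ν q = ν (C a))
    (htr : ∀ (s : ℕ) (b : ℕ → K), (∀ i, i ≤ s → 0 ≤ ν (C (b i))) →
      ν ((C a) ^ s) <
        ν (∑ i ∈ Finset.range (s + 1), C (b i) * q ^ i * (C a) ^ (s - i)) →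
      ∀ i, i ≤ s → 0 < ν (C (b i))) :
    ∀ (s : ℕ) (c : ℕ → K),
      ν (∑ i ∈ Finset.range (s + 1), C (c i) * q ^ i) =
        (Finset.range (s + 1)).inf fun i => ν (C (c i) * q ^ i) := by
  intro s c
  obtain ⟨j, hj, hjmin⟩ :=
    exists_mem_eq_inf (range (s + 1)) nonempty_range_add_one fun i => ν (C (c i) * q ^ i)
  have hmin : ∀ i ∈ range (s + 1), ν (C (c j) * q ^ j) ≤ ν (C (c i) * q ^ i) :=
    fun i hi => hjmin ▸ inf_le hi
  rw [hjmin]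
  exact le_antisymm
    (ResidueTranscendental.map_sum_le_of_isMin htr ha hval (mem_range_succ_iff.mp hj)
      fun i hi => hmin i (mem_range_succ_iff.mpr hi))
    (ν.map_le_sum hmin)
end
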